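/- Let G be a mixed graph over node set X and let P be a partition of X. If the coarse graph co(G,P) is acyclic, then for every strongly connected component W of G there exists a group Y ∈ P with W ⊆ Y. -/
import Mathlib


/-! ## Mixed graphs -/

/-- A mixed graph: directed, bidirected and undirected edges, no self-edges. -/
structure MixedGraph (V : Type) where
  dir : V → V → Prop
  bidir : V → V → Prop
  undir : V → V → Prop
  bidir_symm : ∀ {a b}, bidir a b → bidir b a
  undir_symm : ∀ {a b}, undir a b → undir b a
  dir_irrefl : ∀ a, ¬ dir a a
  bidir_irrefl : ∀ a, ¬ bidir a a
  undir_irrefl : ∀ a, ¬ undir a a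

namespace MixedGraph

variable {V I : Type}

/-- A directed mixed graph is a mixed graph without undirected edges. -/
def IsDMG (G : MixedGraph V) : Prop := ∀ a b, ¬ G.undir a b

/-- `a` and `b` lie in the same strongly connected component: there are directed
paths between them in both directions. -/
def Strongly (G : MixedGraph V) (a b : V) : Prop :=
  Relation.ReflTransGen G.dir a b ∧ Relation.ReflTransGen G.dir b a

lemma Strongly.refl (G : MixedGraph V) (a : V) : G.Strongly a a :=
  ⟨Relation.ReflTransGen.refl, Relation.ReflTransGen.refl⟩

lemma Strongly.symm {G : MixedGraph V} {a b : V} (h : G.Strongly a b) : G.Strongly b a :=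
  ⟨h.2, h.1⟩

/-- A graph is acyclic if it has no nontrivial directed closed walk. -/
def Acyclic (G : MixedGraph V) : Prop := ∀ a, ¬ Relation.TransGen G.dir a a

end MixedGraph

/-! ## Walks -/

/-- The four ways in which an edge can occur on a walk, as traversed from its
first node `a` to its second node `b`: `fw` is `a → b`, `bw` is `a ← b`,
`bi` is `a ↔ b` and `un` is `a − b`. -/
inductive StepKind | fw | bw | bi | un
deriving DecidableEq

/-- A step of a walk: an ordered pair of nodes together with the kind of edge. -/
structure Step (V : Type) where
  a : V
  b : V
  k : StepKind

/-- The step is an actual edge of the graph `G`. -/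
def Step.ok {V : Type} (G : MixedGraph V) (s : Step V) : Prop :=
  match s.k with
  | .fw => G.dir s.a s.b
  | .bw => G.dir s.b s.a
  | .bi => G.bidir s.a s.b
  | .un => G.undir s.a s.b

/-- The edge of the step has an arrowhead at its first node. -/
def Step.headA {V : Type} (s : Step V) : Prop := s.k = .bw ∨ s.k = .bi

/-- The edge of the step has an arrowhead at its second node. -/
def Step.headB {V : Type} (s : Step V) : Prop := s.k = .fw ∨ s.k = .bi

namespace MixedGraph

variable {V I : Type}

/-- `IsWalk G x y L`: the list of steps `L` forms a walk from `x` to `y` in `G`. -/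
inductive IsWalk (G : MixedGraph V) : V → V → List (Step V) → Prop
  | nil (a : V) : IsWalk G a a []
  | cons {c : V} (s : Step V) (L : List (Step V)) (hok : s.ok G)
      (hw : IsWalk G s.b c L) : IsWalk G s.a c (s :: L)

/-- `v` is a collider at junction `i` of the walk `L`: both edges adjacent to the
inner node `v` point into `v`. -/
def ColliderAt (L : List (Step V)) (i : ℕ) (v : V) : Prop :=
  ∃ s t, L[i]? = some s ∧ L[i+1]? = some t ∧ s.b = v ∧ t.a = v ∧ s.headB ∧ t.headA

/-- `v` is a non-collider at junction `i` of the walk `L`. -/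
def NonColliderAt (L : List (Step V)) (i : ℕ) (v : V) : Prop :=
  ∃ s t, L[i]? = some s ∧ L[i+1]? = some t ∧ s.b = v ∧ t.a = v ∧ ¬ (s.headB ∧ t.headA)

/-- The walk `L` from `x` to `y` is m-blocked by the node set `S`. -/
def MBlockedWalk (G : MixedGraph V) (S : Set V) (x y : V) (L : List (Step V)) : Prop :=
  x ∈ S ∨ y ∈ S ∨
  (∃ i v, ColliderAt L i v ∧ ∀ d, Relation.ReflTransGen G.dir v d → d ∉ S) ∨
  (∃ i v, NonColliderAt L i v ∧ v ∈ S)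

/-- The walk `L` from `x` to `y` is σ-blocked by the node set `S`. -/
def SigmaBlockedWalk (G : MixedGraph V) (S : Set V) (x y : V) (L : List (Step V)) : Prop :=
  x ∈ S ∨ y ∈ S ∨
  (∃ i v, ColliderAt L i v ∧ ∀ d, Relation.ReflTransGen G.dir v d → d ∉ S) ∨
  (∃ i s t, L[i]? = some s ∧ L[i+1]? = some t ∧ s.b = t.a ∧ ¬ (s.headB ∧ t.headA) ∧
    s.b ∈ S ∧
    (((s.k = .bw ∨ s.k = .un) ∧ ¬ G.Strongly s.b s.a) ∨
     ((t.k = .fw ∨ t.k = .un) ∧ ¬ G.Strongly t.a t.b)))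

/-- `x` and `y` are m-separated by `S` in `G`. -/
def MSep (G : MixedGraph V) (S : Set V) (x y : V) : Prop :=
  ∀ L, G.IsWalk x y L → G.MBlockedWalk S x y L

/-- `x` and `y` are σ-separated by `S` in `G`. -/
def SigmaSep (G : MixedGraph V) (S : Set V) (x y : V) : Prop :=
  ∀ L, G.IsWalk x y L → G.SigmaBlockedWalk S x y L

/-! ## Acyclification -/

/-- The acyclification of a mixed graph. -/
def acy (G : MixedGraph V) : MixedGraph V where
  dir a b := (∃ c, G.dir a c ∧ G.Strongly c b) ∧ ¬ G.Strongly a b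
  bidir a b := a ≠ b ∧ (G.Strongly a b ∨
    ∃ a' b', G.Strongly a a' ∧ G.Strongly b b' ∧ G.bidir a' b')
  undir a b := ¬ G.Strongly a b ∧ G.undir a b
  bidir_symm := by
    rintro a b ⟨hab, h | ⟨a', b', ha, hb, h⟩⟩
    · exact ⟨hab.symm, Or.inl h.symm⟩
    · exact ⟨hab.symm, Or.inr ⟨b', a', hb, ha, G.bidir_symm h⟩⟩
  undir_symm := by
    rintro a b ⟨h1, h2⟩
    exact ⟨fun h => h1 h.symm, G.undir_symm h2⟩
  dir_irrefl := fun a h => h.2 (Strongly.refl G a)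
  bidir_irrefl := fun a h => h.1 rfl
  undir_irrefl := fun a h => h.1 (Strongly.refl G a)

/-! ## Coarse graphs -/

/-- The coarse (quotient) graph of `G` with respect to the partition given by the
quotient map `q` onto the set of groups `I`. -/
def coarse (G : MixedGraph V) (q : V → I) : MixedGraph I where
  dir Y Z := Y ≠ Z ∧ ∃ y z, q y = Y ∧ q z = Z ∧ G.dir y z
  bidir Y Z := Y ≠ Z ∧ ∃ y z, q y = Y ∧ q z = Z ∧ G.bidir y z
  undir Y Z := Y ≠ Z ∧ ∃ y z, q y = Y ∧ q z = Z ∧ G.undir y z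
  bidir_symm := by
    rintro Y Z ⟨hne, y, z, hy, hz, h⟩
    exact ⟨hne.symm, z, y, hz, hy, G.bidir_symm h⟩
  undir_symm := by
    rintro Y Z ⟨hne, y, z, hy, hz, h⟩
    exact ⟨hne.symm, z, y, hz, hy, G.undir_symm h⟩
  dir_irrefl := fun Y h => h.1 rfl
  bidir_irrefl := fun Y h => h.1 rfl
  undir_irrefl := fun Y h => h.1 rfl

end MixedGraph

/-- `W` is a strongly connected component of `G`. -/
def IsSCC {V : Type} (G : MixedGraph V) (W : Set V) : Prop :=
  ∃ a, W = {b | G.Strongly a b}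

open MixedGraph in
/-- If the coarse graph of `G` with respect to the partition given
by the quotient map `q` is acyclic, then every strongly connected component of `G`
is contained in a single group of the partition. -/
theorem scc_subset_group_of_coarse_acyclic {V I : Type} (G : MixedGraph V) (q : V → I)
    (hq : Function.Surjective q) (hacy : (G.coarse q).Acyclic)
    (W : Set V) (hW : IsSCC G W) :
    ∃ Y : I, ∀ w ∈ W, q w = Y := by
  obtain ⟨a, rfl⟩ := hW
  have key : ∀ x y : V, Relation.ReflTransGen G.dir x y →
      q x = q y ∨ Relation.TransGen (G.coarse q).dir (q x) (q y) := by
    intro x y h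
    induction h with
    | refl => exact Or.inl rfl
    | tail hxb hbc ih =>
      rename_i b c
      by_cases hqe : q b = q c
      · rw [← hqe]; exact ih
      · have step : (G.coarse q).dir (q b) (q c) := ⟨hqe, b, c, rfl, rfl, hbc⟩
        rcases ih with h | h
        · exact Or.inr (h ▸ Relation.TransGen.single step)
        · exact Or.inr (h.tail step)
  refine ⟨q a, fun w hw => ?_⟩
  rcases key w a hw.2 with h | h
  · exact h
  rcases key a w hw.1 with h' | h'
  · exact h'.symm
  · exact absurd (h'.trans h) (hacy (q a))
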